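/- arXiv:2106.10536 — 2 statements merged into one kernel-verified Lean document; each statement's English description precedes it below -/
import Mathlib

section
/- Let m ≥ 1, let X ∈ ℍ^m, let Z ∈ ℍ be purely imaginary (Re Z = 0), and let r ∈ (−1, 1). Set N = 1 + ‖X‖²/4, B = N² + |Z|², z_n = −1 + 2N/B − 2Z/B ∈ ℍ, and B_r = ((1−r)/(1+r) + ‖X‖²/4)² + |Z|². Then (1 − r²)^{−1} · |1 − r·z_n|² = ((1+r)/(1−r)) · B_r / B. (Equivalently, with r = tanh t this is the identity λ_{a_t}∘𝒞 = e^{−t} B^{1/2} B_t^{−1/2} for the Busemann cocycle composed with the Cayley transform.) -/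
/-!
With real coefficients, `1 - r zₙ = (1 + r - 2rN/B) + (2r/B) Z`. Since `Z` is purely imaginary,
the cross term `2 Re(a (bZ)*) = 2ab Re Z` of `|a + bZ|²` vanishes, so
`|1 - r zₙ|² = (1 + r - 2rN/B)² + (2r/B)² |Z|²`. What remains is a rational identity in `r`, `N`
and `|Z|²`: after clearing denominators it is
`((1 + r) B - 2rN)² + 4r²|Z|² = B (((1 - r) + (1 + r)(N - 1))² + (1 + r)²|Z|²)`,
which holds because `B = N² + |Z|²`.
-/

open Quaternion

theorem Quaternion.normSq_coe_add_coe_mul_of_re_eq_zero {R : Type*} [CommRing R] (a b : R)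
    {Z : ℍ[R]} (hZ : Z.re = 0) :
    normSq ((a : ℍ[R]) + (b : ℍ[R]) * Z) = a ^ 2 + b ^ 2 * normSq Z := by
  rw [normSq_add, normSq_coe, map_mul, normSq_coe]
  simp [hZ]

theorem inv_one_sub_sq_mul_cayley_normSq_eq {s q r N B : ℝ} (hN : N = 1 + s / 4)
    (hB : B = N ^ 2 + q) (hB₀ : B ≠ 0) (hr₁ : 1 - r ≠ 0) (hr₂ : 1 + r ≠ 0) :
    (1 - r ^ 2)⁻¹ * ((1 + r - r * (2 * N / B)) ^ 2 + (r * (2 / B)) ^ 2 * q)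
      = (1 + r) / (1 - r) * (((1 - r) / (1 + r) + s / 4) ^ 2 + q) / B := by
  have hr : 1 - r ^ 2 ≠ 0 := by
    rw [show 1 - r ^ 2 = (1 - r) * (1 + r) by ring]
    exact mul_ne_zero hr₁ hr₂
  field_simp
  subst hN hB
  ring

theorem stmt_0_general (m : ℕ) (X : Fin m → Quaternion ℝ) (Z : Quaternion ℝ)
    (hZ : Z.re = 0) (r : ℝ) (hr : r ∈ Set.Ioo (-1 : ℝ) 1)
    (N B Br : ℝ) (zn : Quaternion ℝ)
    (hN : N = 1 + (∑ j, Quaternion.normSq (X j)) / 4)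
    (hB : B = N ^ 2 + Quaternion.normSq Z)
    (hzn : zn = -1 + ((2 * N / B : ℝ) : Quaternion ℝ) - ((2 / B : ℝ) : Quaternion ℝ) * Z)
    (hBr : Br = ((1 - r) / (1 + r) + (∑ j, Quaternion.normSq (X j)) / 4) ^ 2
        + Quaternion.normSq Z) :
    (1 - r ^ 2)⁻¹ * Quaternion.normSq (1 - (r : Quaternion ℝ) * zn)
      = ((1 + r) / (1 - r)) * Br / B := by
  obtain ⟨hr₁, hr₂⟩ := hr
  have hB₀ : B ≠ 0 := by
    have : 0 ≤ ∑ j, normSq (X j) := Finset.sum_nonneg fun j _ => normSq_nonneg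
    have : 0 ≤ normSq Z := normSq_nonneg
    rw [hB, hN]
    positivity
  have hsplit : 1 - (r : ℍ[ℝ]) * zn
      = ((1 + r - r * (2 * N / B) : ℝ) : ℍ[ℝ]) + ((r * (2 / B) : ℝ) : ℍ[ℝ]) * Z := by
    rw [hzn, coe_sub, coe_add, coe_mul, coe_mul, coe_one]
    noncomm_ring
  rw [hsplit, normSq_coe_add_coe_mul_of_re_eq_zero _ _ hZ, hBr]
  exact inv_one_sub_sq_mul_cayley_normSq_eq hN hB hB₀ (by linarith) (by linarith)

/-- the identity `(1 - r²)⁻¹ |1 - r zₙ|² = ((1+r)/(1-r)) Bᵣ / B`, i.e.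
`λ_{a_t} ∘ 𝒞 = e^{-t} B^{1/2} B_t^{-1/2}` with `r = tanh t`. -/
theorem stmt_0 (m : ℕ) (hm : 1 ≤ m) (X : Fin m → Quaternion ℝ) (Z : Quaternion ℝ)
    (hZ : Z.re = 0) (r : ℝ) (hr : r ∈ Set.Ioo (-1 : ℝ) 1)
    (N B Br : ℝ) (zn : Quaternion ℝ)
    (hN : N = 1 + (∑ j, Quaternion.normSq (X j)) / 4)
    (hB : B = N ^ 2 + Quaternion.normSq Z)
    (hzn : zn = -1 + ((2 * N / B : ℝ) : Quaternion ℝ) - ((2 / B : ℝ) : Quaternion ℝ) * Z)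
    (hBr : Br = ((1 - r) / (1 + r) + (∑ j, Quaternion.normSq (X j)) / 4) ^ 2
        + Quaternion.normSq Z) :
    (1 - r ^ 2)⁻¹ * Quaternion.normSq (1 - (r : Quaternion ℝ) * zn)
      = ((1 + r) / (1 - r)) * Br / B :=
  stmt_0_general m X Z hZ r hr N B Br zn hN hB hzn hBr
end

section
/- Let m ≥ 1, let X ∈ ℍ^m, and let Z ∈ ℍ be purely imaginary. Let A(X,Z) be the (m+2)×(m+2) quaternion matrix written in block form (blocks of sizes 1, m, 1) as A(X,Z) = [[Z/2, −X*/2, Z/2], [−X/2, 0, −X/2], [−Z/2, X*/2, −Z/2]], where X is a column vector and X* its conjugate-transpose row vector. Then the matrix exponential of A(X,Z) equals M(X,Z) := [[1 + ‖X‖²/8 + Z/2, −X*/2, ‖X‖²/8 + Z/2], [−X/2, I_m, −X/2], [−‖X‖²/8 − Z/2, X*/2, 1 − ‖X‖²/8 − Z/2]]. (In particular A(X,Z)³ = 0 and exp(A) = I + A + A²/2.) -/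
/-!
Write `s = ‖X‖²/4`. The last row of `A(X,Z)` is minus its first row and the last column equals
the first column, so in `A²` the `Z²/4` contributions cancel and
`A² = [[s, 0, s], [0, 0, 0], [-s, 0, -s]]`; multiplying by `A` once more combines the first and
last rows of `A` with opposite signs, so `A³ = 0`. The exponential series therefore stops at
`I + A + A²/2`, which is `M(X,Z)` entry by entry.
-/

open Quaternion Matrix

noncomputable section

/-- The index type for `(m+2) × (m+2)` matrices in `(1, m, 1)` block form. -/
abbrev Idx (m : ℕ) := Unit ⊕ Fin m ⊕ Unit

/-- The nilpotent Lie algebra element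
`A(X,Z) = [[Z/2, -X*/2, Z/2], [-X/2, 0, -X/2], [-Z/2, X*/2, -Z/2]]`. -/
def matA (m : ℕ) (X : Fin m → Quaternion ℝ) (Z : Quaternion ℝ) :
    Matrix (Idx m) (Idx m) (Quaternion ℝ) :=
  Matrix.of fun i j =>
    match i, j with
    | Sum.inl _, Sum.inl _ => Z / 2
    | Sum.inl _, Sum.inr (Sum.inl k) => -star (X k) / 2
    | Sum.inl _, Sum.inr (Sum.inr _) => Z / 2
    | Sum.inr (Sum.inl k), Sum.inl _ => -X k / 2
    | Sum.inr (Sum.inl _), Sum.inr (Sum.inl _) => 0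
    | Sum.inr (Sum.inl k), Sum.inr (Sum.inr _) => -X k / 2
    | Sum.inr (Sum.inr _), Sum.inl _ => -Z / 2
    | Sum.inr (Sum.inr _), Sum.inr (Sum.inl k) => star (X k) / 2
    | Sum.inr (Sum.inr _), Sum.inr (Sum.inr _) => -Z / 2

/-- The group element `M(X,Z) = exp(A(X,Z))`:
`[[1 + ‖X‖²/8 + Z/2, -X*/2, ‖X‖²/8 + Z/2], [-X/2, I, -X/2],
  [-‖X‖²/8 - Z/2, X*/2, 1 - ‖X‖²/8 - Z/2]]`, where `‖X‖² = ∑ⱼ |Xⱼ|²`. -/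
def matM (m : ℕ) (X : Fin m → Quaternion ℝ) (Z : Quaternion ℝ) :
    Matrix (Idx m) (Idx m) (Quaternion ℝ) :=
  Matrix.of fun i j =>
    match i, j with
    | Sum.inl _, Sum.inl _ =>
        1 + (((∑ k, Quaternion.normSq (X k)) / 8 : ℝ) : Quaternion ℝ) + Z / 2
    | Sum.inl _, Sum.inr (Sum.inl k) => -star (X k) / 2
    | Sum.inl _, Sum.inr (Sum.inr _) =>
        (((∑ k, Quaternion.normSq (X k)) / 8 : ℝ) : Quaternion ℝ) + Z / 2
    | Sum.inr (Sum.inl k), Sum.inl _ => -X k / 2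
    | Sum.inr (Sum.inl k), Sum.inr (Sum.inl l) => if k = l then 1 else 0
    | Sum.inr (Sum.inl k), Sum.inr (Sum.inr _) => -X k / 2
    | Sum.inr (Sum.inr _), Sum.inl _ =>
        -(((∑ k, Quaternion.normSq (X k)) / 8 : ℝ) : Quaternion ℝ) - Z / 2
    | Sum.inr (Sum.inr _), Sum.inr (Sum.inl k) => star (X k) / 2
    | Sum.inr (Sum.inr _), Sum.inr (Sum.inr _) =>
        1 - (((∑ k, Quaternion.normSq (X k)) / 8 : ℝ) : Quaternion ℝ) - Z / 2

open scoped Nat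

theorem NormedSpace.exp_eq_sum_range_of_pow_eq_zero (𝕂 : Type*) {𝔸 : Type*} [Field 𝕂]
    [CharZero 𝕂] [Ring 𝔸] [Algebra 𝕂 𝔸] [TopologicalSpace 𝔸] [IsTopologicalRing 𝔸] {x : 𝔸}
    {k : ℕ} (hx : x ^ k = 0) :
    NormedSpace.exp x = ∑ n ∈ Finset.range k, (n !⁻¹ : 𝕂) • x ^ n := by
  rw [NormedSpace.exp_eq_tsum 𝕂]
  exact tsum_eq_sum fun n hn => by rw [pow_eq_zero_of_le (by simpa using hn) hx, smul_zero]

theorem NormedSpace.exp_eq_of_pow_three_eq_zero (𝕂 : Type*) {𝔸 : Type*} [Field 𝕂] [CharZero 𝕂]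
    [Ring 𝔸] [Algebra 𝕂 𝔸] [TopologicalSpace 𝔸] [IsTopologicalRing 𝔸] {x : 𝔸}
    (hx : x ^ 3 = 0) : NormedSpace.exp x = 1 + x + (2⁻¹ : 𝕂) • x ^ 2 := by
  simp [NormedSpace.exp_eq_sum_range_of_pow_eq_zero 𝕂 hx, Finset.sum_range_succ, Nat.factorial]

theorem Quaternion.coe_sum {R ι : Type*} [CommRing R] (s : Finset ι) (f : ι → R) :
    ((∑ i ∈ s, f i : R) : Quaternion R) = ∑ i ∈ s, (f i : Quaternion R) := by
  rw [← Quaternion.algebraMap_def, map_sum]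

theorem Quaternion.star_div_two_mul_div_two (a : ℍ) :
    star a / 2 * (a / 2) = ((normSq a / 4 : ℝ) : ℍ) := by
  rw [(Commute.refl (2 : ℍ)).div_mul_div_comm (Commute.ofNat_left 2 a).inv_left₀, star_mul_self]
  norm_num [coe_div]
  rfl

section

variable (m : ℕ) (X : Fin m → ℍ) (Z : ℍ)

def matASq : Matrix (Idx m) (Idx m) ℍ :=
  Matrix.of fun i j =>
    match i, j with
    | Sum.inl _, Sum.inl _ => (((∑ k, normSq (X k)) / 4 : ℝ) : ℍ)
    | Sum.inl _, Sum.inr (Sum.inr _) => (((∑ k, normSq (X k)) / 4 : ℝ) : ℍ)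
    | Sum.inr (Sum.inr _), Sum.inl _ => -(((∑ k, normSq (X k)) / 4 : ℝ) : ℍ)
    | Sum.inr (Sum.inr _), Sum.inr (Sum.inr _) => -(((∑ k, normSq (X k)) / 4 : ℝ) : ℍ)
    | _, _ => 0

theorem matA_sq : matA m X Z ^ 2 = matASq m X := by
  refine Matrix.ext fun i j => ?_
  rcases i with i | i | i <;> rcases j with j | j | j <;>
    simp only [sq, Matrix.mul_apply, matA, matASq, Matrix.of_apply, Fintype.sum_sum_type,
      Finset.univ_unique, Finset.sum_singleton, neg_div, neg_mul, mul_neg, neg_neg, mul_zero,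
      zero_mul, Finset.sum_const_zero, Finset.sum_neg_distrib,
      Quaternion.star_div_two_mul_div_two, Finset.sum_div, Quaternion.coe_sum] <;>
    abel

theorem matASq_mul_matA : matASq m X * matA m X Z = 0 := by
  refine Matrix.ext fun i j => ?_
  rcases i with i | i | i <;> rcases j with j | j | j <;>
    simp [Matrix.mul_apply, matA, matASq, Fintype.sum_sum_type, neg_div]

theorem matA_pow_three : matA m X Z ^ 3 = 0 := by
  rw [pow_succ, matA_sq, matASq_mul_matA]

theorem one_add_matA_add_half_matASq : 1 + matA m X Z + (2⁻¹ : ℝ) • matASq m X = matM m X Z := by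
  have half_quarter : (2⁻¹ : ℝ) • (((∑ k, normSq (X k)) / 4 : ℝ) : ℍ)
      = (((∑ k, normSq (X k)) / 8 : ℝ) : ℍ) := by
    rw [Quaternion.smul_coe]
    congr 1
    ring
  refine Matrix.ext fun i j => ?_
  rcases i with i | i | i <;> rcases j with j | j | j <;>
    simp only [matA, matASq, matM, Matrix.of_apply, Matrix.add_apply, Matrix.smul_apply,
      Matrix.one_apply, smul_zero, smul_neg, half_quarter, neg_div, sub_eq_add_neg,
      Sum.inl.injEq, Sum.inr.injEq, if_true, reduceCtorEq, if_false] <;>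
    abel

end

theorem stmt_2_general (m : ℕ) (X : Fin m → Quaternion ℝ) (Z : Quaternion ℝ) :
    NormedSpace.exp (matA m X Z) = matM m X Z := by
  rw [NormedSpace.exp_eq_of_pow_three_eq_zero ℝ (matA_pow_three m X Z), matA_sq,
    one_add_matA_add_half_matASq]

/-- the matrix exponential of `A(X,Z)` equals `M(X,Z)`. -/
theorem stmt_2 (m : ℕ) (hm : 1 ≤ m) (X : Fin m → Quaternion ℝ) (Z : Quaternion ℝ)
    (hZ : Z.re = 0) :
    NormedSpace.exp (matA m X Z) = matM m X Z :=
  stmt_2_general m X Z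
end
end
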